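/- Let C be a nonempty weak* compact convex subset of a dual Banach space and let {T₁, …, T_n} be a finite commuting family of weak*-continuous nonexpansive self-maps of C. Then the common fixed point set ⋂_{i=1}^n Fix T_i is nonempty and is a nonexpansive retract of C. -/

import Mathlib

/-!
Induction on the number of maps; commutativity makes the common fixed point set `F` of the first
maps invariant under the next one, `T`. If `r` is a nonexpansive retraction of `C` onto `F`, then
`S = T ∘ r` is a nonexpansive self-map of `C`, and an approximate fixed point `y` of `S` is an
approximate fixed point of `T` close to `r y ∈ F`. Browder's approximants, the fixed points `g_n x`
of the contractions `y ↦ x / (n + 1) + (1 - 1 / (n + 1)) • S y`, are nonexpansive maps fixing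
`F ∩ Fix T`, and are approximate fixed points of `S` since `C` is norm bounded (Baire's theorem in
the compact space `C`, plus convexity). Their pointwise weak* limit along an ultrafilter is a
nonexpansive retraction onto `F ∩ Fix T`: `F` is weak* closed, `T` is weak* continuous, and the
dual norm is weak* lower semicontinuous.
-/

open Filter Topology Set

section Retraction

variable {X : Type*} [PseudoMetricSpace X] {C F : Set X} {T r : X → X}

theorem dist_retraction_le_two_mul (hr : MapsTo r C F) (hr1 : LipschitzOnWith 1 r C)
    (hrF : ∀ x ∈ F, r x = x) (hF : F ⊆ C) (hTF : MapsTo T F F) {y : X} (hy : y ∈ C) :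
    dist y (r y) ≤ 2 * dist y (T (r y)) := by
  have hTry : T (r y) ∈ F := hTF (hr hy)
  calc dist y (r y) ≤ dist y (T (r y)) + dist (r (T (r y))) (r y) := by
        rw [hrF _ hTry]; exact dist_triangle _ _ _
    _ ≤ dist y (T (r y)) + dist (T (r y)) y := by
        gcongr; simpa using hr1.dist_le_mul _ (hF hTry) _ hy
    _ = 2 * dist y (T (r y)) := by rw [dist_comm (T (r y))]; ring

theorem dist_apply_le_three_mul (hT1 : LipschitzOnWith 1 T C) (hr : MapsTo r C F)
    (hr1 : LipschitzOnWith 1 r C) (hrF : ∀ x ∈ F, r x = x) (hF : F ⊆ C) (hTF : MapsTo T F F)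
    {y : X} (hy : y ∈ C) : dist y (T y) ≤ 3 * dist y (T (r y)) :=
  calc dist y (T y) ≤ dist y (T (r y)) + dist (T (r y)) (T y) := dist_triangle _ _ _
    _ ≤ dist y (T (r y)) + dist y (r y) := by
        gcongr; simpa [dist_comm] using hT1.dist_le_mul _ (hF (hr hy)) _ hy
    _ ≤ 3 * dist y (T (r y)) := by
        linarith [dist_retraction_le_two_mul hr hr1 hrF hF hTF hy]

end Retraction

section Browder

variable {X : Type*} [NormedAddCommGroup X] [NormedSpace ℝ X] {C F : Set X} {S T r : X → X}
  {t : ℝ}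

theorem exists_mem_eq_smul_add_smul_apply [CompleteSpace X] (hC : IsClosed C)
    (hconv : Convex ℝ C) (hS : MapsTo S C C) (hS1 : LipschitzOnWith 1 S C) (ht0 : 0 ≤ t)
    (ht1 : t < 1) {x : X} (hx : x ∈ C) : ∃ y ∈ C, y = (1 - t) • x + t • S y := by
  set Ψ : X → X := fun y => (1 - t) • x + t • S y
  have hΨ : MapsTo Ψ C C := fun y hy => hconv hx (hS hy) (by linarith) ht0 (by ring)
  have hΨ1 : LipschitzOnWith ⟨t, ht0⟩ Ψ C := by
    refine LipschitzOnWith.of_dist_le_mul fun y hy z hz => ?_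
    rw [dist_add_left, dist_smul₀, Real.norm_of_nonneg ht0]
    exact mul_le_mul_of_nonneg_left (by simpa using hS1.dist_le_mul y hy z hz) ht0
  obtain ⟨y, hyC, hy, -⟩ := ContractingWith.exists_fixedPoint' hC.isComplete hΨ
    ⟨ht1, hΨ1.mapsToRestrict hΨ⟩ hx (edist_ne_top _ _)
  exact ⟨y, hyC, hy.symm⟩

theorem norm_sub_le_of_eq_smul_add_smul_apply (hS1 : LipschitzOnWith 1 S C) (ht0 : 0 ≤ t)
    (ht1 : t < 1) {x x' y y' : X} (hy : y ∈ C) (hy' : y' ∈ C)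
    (e : y = (1 - t) • x + t • S y) (e' : y' = (1 - t) • x' + t • S y') :
    ‖y - y'‖ ≤ ‖x - x'‖ := by
  have hsplit : y - y' = (1 - t) • (x - x') + t • (S y - S y') := by
    rw [smul_sub, smul_sub]; nth_rw 1 [e, e']; abel
  have hS' : ‖S y - S y'‖ ≤ ‖y - y'‖ := by
    simpa [dist_eq_norm] using hS1.dist_le_mul y hy y' hy'
  have : ‖y - y'‖ ≤ (1 - t) * ‖x - x'‖ + t * ‖y - y'‖ := by
    calc ‖y - y'‖ ≤ ‖(1 - t) • (x - x')‖ + ‖t • (S y - S y')‖ := hsplit ▸ norm_add_le _ _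
      _ ≤ (1 - t) * ‖x - x'‖ + t * ‖y - y'‖ := by
        rw [norm_smul, norm_smul, Real.norm_of_nonneg (by linarith), Real.norm_of_nonneg ht0]
        gcongr
  nlinarith

theorem exists_approxFixedPoints [CompleteSpace X] (hC : IsClosed C) (hconv : Convex ℝ C)
    (hb : Bornology.IsBounded C) (hS : MapsTo S C C) (hS1 : LipschitzOnWith 1 S C) :
    ∃ g : ℕ → X → X, (∀ n, MapsTo (g n) C C) ∧ (∀ n, LipschitzOnWith 1 (g n) C) ∧
      (∀ n, ∀ x ∈ C, S x = x → g n x = x) ∧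
      ∀ x ∈ C, Tendsto (fun n => g n x - S (g n x)) atTop (𝓝 0) := by
  have ht : ∀ n : ℕ, 0 ≤ 1 - 1 / ((n : ℝ) + 1) ∧ 1 - 1 / ((n : ℝ) + 1) < 1 := fun n =>
    ⟨sub_nonneg.2 (div_le_one_of_le₀ (by simp) (by positivity)), sub_lt_self _ (by positivity)⟩
  choose! g hgC hg using fun n (x : X) (hx : x ∈ C) =>
    exists_mem_eq_smul_add_smul_apply hC hconv hS hS1 (ht n).1 (ht n).2 hx
  refine ⟨g, hgC, fun n => LipschitzOnWith.of_dist_le_mul fun x hx x' hx' => ?_,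
    fun n x hx hSx => ?_, fun x hx => ?_⟩
  · simpa [dist_eq_norm] using norm_sub_le_of_eq_smul_add_smul_apply hS1 (ht n).1 (ht n).2
      (hgC n x hx) (hgC n x' hx') (hg n x hx) (hg n x' hx')
  · have hself : x = (1 - (1 - 1 / ((n : ℝ) + 1))) • x + (1 - 1 / ((n : ℝ) + 1)) • S x := by
      rw [hSx, ← add_smul, sub_add_cancel, one_smul]
    simpa [sub_eq_zero] using norm_sub_le_of_eq_smul_add_smul_apply hS1 (ht n).1 (ht n).2
      (hgC n x hx) hx (hg n x hx) hself
  · rw [tendsto_zero_iff_norm_tendsto_zero]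
    refine squeeze_zero (fun n => norm_nonneg _) (fun n => ?_)
      (by simpa only [zero_mul] using
        tendsto_one_div_add_atTop_nhds_zero_nat.mul_const (Metric.diam C))
    have e : g n x - S (g n x) = (1 / ((n : ℝ) + 1)) • (x - S (g n x)) := by
      nth_rw 1 [hg n x hx]
      module
    rw [e, norm_smul, Real.norm_of_nonneg (by positivity), ← dist_eq_norm]
    exact mul_le_mul_of_nonneg_left (Metric.dist_le_diam_of_mem hb hx (hS (hgC n x hx)))
      (by positivity : (0 : ℝ) ≤ 1 / ((n : ℝ) + 1))

theorem exists_approxFixedPoints_of_retraction [CompleteSpace X] (hC : IsClosed C)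
    (hconv : Convex ℝ C) (hb : Bornology.IsBounded C) (hT : MapsTo T C C)
    (hT1 : LipschitzOnWith 1 T C) (hTF : MapsTo T F F) (hr : MapsTo r C F)
    (hr1 : LipschitzOnWith 1 r C) (hrF : ∀ x ∈ F, r x = x) (hF : F ⊆ C) :
    ∃ g : ℕ → X → X, (∀ n, MapsTo (g n) C C) ∧ (∀ n, LipschitzOnWith 1 (g n) C) ∧
      (∀ n, ∀ x ∈ F, T x = x → g n x = x) ∧
      ∀ x ∈ C, Tendsto (fun n => g n x - r (g n x)) atTop (𝓝 0) ∧
        Tendsto (fun n => g n x - T (g n x)) atTop (𝓝 0) := by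
  obtain ⟨g, hgC, hg1, hgfix, hgS⟩ := exists_approxFixedPoints hC hconv hb
    (hT.comp (hr.mono_right hF)) (by simpa using hT1.comp hr1 (hr.mono_right hF))
  refine ⟨g, hgC, hg1, fun n x hxF hTx => hgfix n x (hF hxF) (by simp [hrF x hxF, hTx]),
    fun x hx => ?_⟩
  have hS : Tendsto (fun n => ‖g n x - T (r (g n x))‖) atTop (𝓝 0) := by
    simpa using (hgS x hx).norm
  refine ⟨squeeze_zero_norm (fun n => ?_) (by simpa using hS.const_mul 2),
    squeeze_zero_norm (fun n => ?_) (by simpa using hS.const_mul 3)⟩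
  · simpa [dist_eq_norm] using dist_retraction_le_two_mul hr hr1 hrF hF hTF (hgC n hx)
  · simpa [dist_eq_norm] using dist_apply_le_three_mul hT1 hr hr1 hrF hF hTF (hgC n hx)

end Browder

theorem IsCompact.exists_ultrafilter_forall_tendsto {X ι : Type*} [TopologicalSpace X]
    {K : Set X} (hK : IsCompact K) {g : ι → X → X} (hg : ∀ i, MapsTo (g i) K K)
    (l : Filter ι) [l.NeBot] :
    ∃ 𝒰 : Ultrafilter ι, ↑𝒰 ≤ l ∧
      ∃ h : X → X, MapsTo h K K ∧ ∀ x ∈ K, Tendsto (fun i => g i x) 𝒰 (𝓝 (h x)) := by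
  have hlim : ∀ x ∈ K, ∃ y ∈ K, Tendsto (fun i => g i x) (Ultrafilter.of l) (𝓝 y) :=
    fun x hx => hK.ultrafilter_le_nhds ((Ultrafilter.of l).map fun i => g i x) <|
      le_principal_iff.2 (Eventually.of_forall (f := (Ultrafilter.of l : Filter ι)) (hg · hx))
  classical
  choose h hhK hh using hlim
  refine ⟨Ultrafilter.of l, Ultrafilter.of_le l, fun x => if hx : x ∈ K then h x hx else x,
    fun x hx => ?_, fun x hx => ?_⟩
  · simpa only [dif_pos hx] using hhK x hx
  · simpa only [dif_pos hx] using hh x hx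

namespace WeakDual

variable {E : Type*} [NormedAddCommGroup E] [NormedSpace ℝ E]

/-- Nonexpansiveness for the dual norm, which is not given by a metric on `WeakDual ℝ E`. -/
def NonexpansiveOn (f : WeakDual ℝ E → WeakDual ℝ E) (C : Set (WeakDual ℝ E)) : Prop :=
  ∀ y ∈ C, ∀ z ∈ C, ‖toStrongDual (f y - f z)‖ ≤ ‖toStrongDual (y - z)‖

structure IsNonexpansiveRetraction (C D : Set (WeakDual ℝ E))
    (R : WeakDual ℝ E → WeakDual ℝ E) : Prop where
  mapsTo : MapsTo R C D
  nonexpansiveOn : NonexpansiveOn R C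
  eq_self : ∀ x ∈ D, R x = x

variable {C F : Set (WeakDual ℝ E)} {f T r : WeakDual ℝ E → WeakDual ℝ E}

theorem nonexpansiveOn_iff_lipschitzOnWith : NonexpansiveOn f C ↔
    LipschitzOnWith 1 (fun x => toStrongDual (f (StrongDual.toWeakDual x)))
      (StrongDual.toWeakDual ⁻¹' C) := by
  simp only [lipschitzOnWith_iff_dist_le_mul, NNReal.coe_one, one_mul, dist_eq_norm, ← map_sub]
  rfl

theorem norm_toStrongDual_le_of_tendsto {ι : Type*} {l : Filter ι} [l.NeBot]
    {u : ι → WeakDual ℝ E} {w : WeakDual ℝ E} (hu : Tendsto u l (𝓝 w)) {c : ℝ}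
    (hc : ∀ᶠ i in l, ‖toStrongDual (u i)‖ ≤ c) : ‖toStrongDual w‖ ≤ c := by
  simpa using (isClosed_closedBall 0 c).mem_of_tendsto hu (by simpa using hc)

theorem tendsto_of_tendsto_toStrongDual_sub {ι : Type*} {l : Filter ι}
    {u v : ι → WeakDual ℝ E} {w : WeakDual ℝ E} (hu : Tendsto u l (𝓝 w))
    (huv : Tendsto (fun i => toStrongDual (u i - v i)) l (𝓝 0)) : Tendsto v l (𝓝 w) := by
  simpa using hu.sub ((NormedSpace.Dual.toWeakDual_continuous.tendsto 0).comp huv)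

theorem isBounded_of_isCompact_of_convex (hcomp : IsCompact C) (hconv : Convex ℝ C) :
    Bornology.IsBounded C := by
  rcases C.eq_empty_or_nonempty with rfl | hne
  · exact Bornology.isBounded_empty
  have := isCompact_iff_compactSpace.mp hcomp
  have := hne.to_subtype
  obtain ⟨m, x₀, hx₀⟩ := nonempty_interior_of_iUnion_of_closed
    (f := fun m : ℕ => {x : C | ‖toStrongDual (x : WeakDual ℝ E)‖ ≤ m})
    (fun m => by
      convert (isClosed_closedBall (0 : StrongDual ℝ E) m).preimage continuous_subtype_val using 1
      ext; simp)
    (iUnion_eq_univ_iff.2 fun x => exists_nat_ge ‖toStrongDual (x : WeakDual ℝ E)‖)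
  set x : WeakDual ℝ E := x₀.1
  obtain ⟨U, hU, hUm⟩ : ∃ U ∈ 𝓝 x, ∀ w ∈ C, w ∈ U → ‖toStrongDual w‖ ≤ m := by
    have h := mem_interior_iff_mem_nhds.mp hx₀
    rw [nhds_subtype, mem_comap] at h
    obtain ⟨U, hU, hUsub⟩ := h
    exact ⟨U, hU, fun w hw hwU => hUsub (a := ⟨w, hw⟩) hwU⟩
  have hV : (x + ·) ⁻¹' U ∈ 𝓝 0 :=
    (continuous_const_add x).tendsto' 0 x (add_zero x) hU
  obtain ⟨a, -, habs⟩ := ((hcomp.image (continuous_sub_right x)).isVonNBounded ℝ hV).exists_pos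
  set c := max a 1
  have hc1 : 1 ≤ c := le_max_right _ _
  have hbound : ∀ w ∈ C, ‖toStrongDual w‖ ≤ ‖toStrongDual x‖ + c * (m + ‖toStrongDual x‖) := by
    intro w hw
    obtain ⟨v, hvV, hv⟩ := mem_smul_set.mp <|
      habs c (by rw [Real.norm_of_nonneg (by positivity)]; exact le_max_left _ _) ⟨w, hw, rfl⟩
    replace hv : c • v = w - x := hv
    have hxv : x + v ∈ C := by
      have e : x + v = (1 - c⁻¹) • x + c⁻¹ • w := by
        rw [show v = c⁻¹ • (w - x) by rw [← hv, inv_smul_smul₀ (by positivity)]]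
        module
      rw [e]
      exact hconv x₀.2 hw (sub_nonneg.2 (inv_le_one_of_one_le₀ hc1)) (by positivity) (by ring)
    have hv' : ‖toStrongDual v‖ ≤ m + ‖toStrongDual x‖ := by
      simpa using (norm_sub_le (toStrongDual (x + v)) (toStrongDual x)).trans
        (add_le_add_left (hUm _ hxv hvV) _)
    calc ‖toStrongDual w‖ = ‖toStrongDual x + c • toStrongDual v‖ := by
          rw [← map_smul, ← map_add, hv, add_sub_cancel]
      _ ≤ ‖toStrongDual x‖ + c * (m + ‖toStrongDual x‖) := by
          refine (norm_add_le _ _).trans ?_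
          rw [norm_smul, Real.norm_of_nonneg (by positivity)]
          gcongr
  rw [← isBounded_toWeakDual_preimage_iff_isBounded, isBounded_iff_forall_norm_le]
  exact ⟨_, fun g hg => hbound _ hg⟩

theorem exists_approxFixedPoints_of_retraction (hC : IsClosed C) (hconv : Convex ℝ C)
    (hb : Bornology.IsBounded C) (hT : MapsTo T C C) (hT1 : NonexpansiveOn T C)
    (hTF : MapsTo T F F) (hr : IsNonexpansiveRetraction C F r) (hF : F ⊆ C) :
    ∃ g : ℕ → WeakDual ℝ E → WeakDual ℝ E, (∀ n, MapsTo (g n) C C) ∧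
      (∀ n, NonexpansiveOn (g n) C) ∧ (∀ n, ∀ x ∈ F, T x = x → g n x = x) ∧
      ∀ x ∈ C, Tendsto (fun n => toStrongDual (g n x - r (g n x))) atTop (𝓝 0) ∧
        Tendsto (fun n => toStrongDual (g n x - T (g n x))) atTop (𝓝 0) := by
  obtain ⟨g, hgC, hg1, hgfix, hg⟩ := _root_.exists_approxFixedPoints_of_retraction
    (hC.preimage NormedSpace.Dual.toWeakDual_continuous)
    (hconv.linear_preimage StrongDual.toWeakDual.toLinearMap) hb (fun x hx => hT hx)
    (nonexpansiveOn_iff_lipschitzOnWith.mp hT1) (fun x hx => hTF hx)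
    (fun x hx => hr.mapsTo hx) (nonexpansiveOn_iff_lipschitzOnWith.mp hr.nonexpansiveOn)
    (fun x hx => congrArg toStrongDual (hr.eq_self _ hx)) hF
  refine ⟨fun n x => StrongDual.toWeakDual (g n (toStrongDual x)), fun n x hx => hgC n hx,
    fun n => nonexpansiveOn_iff_lipschitzOnWith.mpr (hg1 n),
    fun n x hx hTx => congrArg StrongDual.toWeakDual (hgfix n _ hx (congrArg toStrongDual hTx)),
    fun x hx => hg _ hx⟩

theorem IsNonexpansiveRetraction.exists_onto_fixedPoints (hcomp : IsCompact C)
    (hconv : Convex ℝ C) (hT : MapsTo T C C) (hTc : ContinuousOn T C)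
    (hT1 : NonexpansiveOn T C) (hF : F ⊆ C) (hFc : IsClosed F) (hTF : MapsTo T F F)
    (hr : IsNonexpansiveRetraction C F r) :
    ∃ R, IsNonexpansiveRetraction C {x ∈ F | T x = x} R := by
  obtain ⟨g, hgC, hg1, hgfix, hg⟩ := exists_approxFixedPoints_of_retraction hcomp.isClosed hconv
    (isBounded_of_isCompact_of_convex hcomp hconv) hT hT1 hTF hr hF
  obtain ⟨𝒰, h𝒰, h, hhC, hh⟩ := hcomp.exists_ultrafilter_forall_tendsto hgC atTop
  refine ⟨h, fun x hx => ⟨?_, ?_⟩, fun y hy z hz => ?_, fun x ⟨hxF, hTx⟩ => ?_⟩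
  · exact hFc.mem_of_tendsto
      (tendsto_of_tendsto_toStrongDual_sub (hh x hx) ((hg x hx).1.mono_left h𝒰))
      (Eventually.of_forall fun n => hr.mapsTo (hgC n hx))
  · have hTg := ((hTc _ (hhC hx)).tendsto.comp
      (tendsto_nhdsWithin_iff.2 ⟨hh x hx, Eventually.of_forall fun n => hgC n hx⟩))
    exact tendsto_nhds_unique hTg
      (tendsto_of_tendsto_toStrongDual_sub (hh x hx) ((hg x hx).2.mono_left h𝒰))
  · exact norm_toStrongDual_le_of_tendsto ((hh y hy).sub (hh z hz))
      (Eventually.of_forall fun n => hg1 n y hy z hz)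
  · refine tendsto_nhds_unique (hh x (hF hxF)) ?_
    simp only [hgfix _ x hxF hTx]
    exact tendsto_const_nhds

theorem exists_isNonexpansiveRetraction_setOf_forall_fixed {ι : Type*} (hcomp : IsCompact C)
    (hconv : Convex ℝ C) {T : ι → WeakDual ℝ E → WeakDual ℝ E} (hT : ∀ i, MapsTo (T i) C C)
    (hTc : ∀ i, ContinuousOn (T i) C) (hT1 : ∀ i, NonexpansiveOn (T i) C)
    (hcomm : ∀ i j, ∀ x ∈ C, T i (T j x) = T j (T i x)) (s : Finset ι) :
    IsClosed {x ∈ C | ∀ i ∈ s, T i x = x} ∧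
      ∃ R, IsNonexpansiveRetraction C {x ∈ C | ∀ i ∈ s, T i x = x} R := by
  classical
  induction s using Finset.induction_on with
  | empty => exact ⟨by simpa using hcomp.isClosed, id, fun x hx => by simpa using hx,
      fun y _ z _ => le_rfl, fun x _ => rfl⟩
  | insert j s _ ih =>
    obtain ⟨hDc, r, hr⟩ := ih
    have hD : {x ∈ C | ∀ i ∈ insert j s, T i x = x} =
        {x ∈ {x ∈ C | ∀ i ∈ s, T i x = x} | T j x = x} := by
      ext x; simp only [Finset.forall_mem_insert, mem_ofPred_eq]; tauto
    have hTD : MapsTo (T j) {x ∈ C | ∀ i ∈ s, T i x = x} {x ∈ C | ∀ i ∈ s, T i x = x} :=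
      fun x ⟨hxC, hx⟩ => ⟨hT j hxC, fun i hi => by rw [hcomm i j x hxC, hx i hi]⟩
    rw [hD]
    exact ⟨hDc.isClosed_eq ((hTc j).mono fun x hx => hx.1) continuousOn_id,
      hr.exists_onto_fixedPoints hcomp hconv (hT j) (hTc j) (hT1 j) (fun x hx => hx.1) hDc hTD⟩

end WeakDual

/-- A finite commuting family of weak*-continuous nonexpansive
self-maps of a nonempty weak* compact convex set `C` has a nonempty common fixed
point set which is a nonexpansive retract of `C`. -/
theorem stmt13 {E : Type*} [NormedAddCommGroup E] [NormedSpace ℝ E]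
    (C : Set (WeakDual ℝ E)) (hne : C.Nonempty) (hcomp : IsCompact C) (hconv : Convex ℝ C)
    (n : ℕ) (T : Fin n → WeakDual ℝ E → WeakDual ℝ E)
    (hTmaps : ∀ i, Set.MapsTo (T i) C C)
    (hTc : ∀ i, ContinuousOn (T i) C)
    (hTne : ∀ i, ∀ y ∈ C, ∀ z ∈ C,
      ‖WeakDual.toStrongDual (T i y - T i z)‖ ≤ ‖WeakDual.toStrongDual (y - z)‖)
    (hcomm : ∀ i j, ∀ x ∈ C, T i (T j x) = T j (T i x)) :
    {x | x ∈ C ∧ ∀ i, T i x = x}.Nonempty ∧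
    ∃ R : WeakDual ℝ E → WeakDual ℝ E,
      Set.MapsTo R C {x | x ∈ C ∧ ∀ i, T i x = x} ∧
      (∀ y ∈ C, ∀ z ∈ C,
        ‖WeakDual.toStrongDual (R y - R z)‖ ≤ ‖WeakDual.toStrongDual (y - z)‖) ∧
      (∀ x, (x ∈ C ∧ ∀ i, T i x = x) → R x = x) := by
  obtain ⟨-, R, hR⟩ := WeakDual.exists_isNonexpansiveRetraction_setOf_forall_fixed hcomp hconv
    hTmaps hTc hTne hcomm Finset.univ
  simp only [Finset.mem_univ, true_implies] at hR
  obtain ⟨x, hx⟩ := hne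
  exact ⟨⟨R x, hR.mapsTo hx⟩, R, hR.mapsTo, hR.nonexpansiveOn, hR.eq_self⟩
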